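/- Suppose t ↦ (t², t³) parametrizes the cusp C̃ = {y² = x³} ⊆ ℂ² and t ↦ (t², t⁵) parametrizes C = {y² = x⁵} ⊆ ℂ². Then the homeomorphism φ : C → C̃ defined by φ(t², t⁵) = (t², t³) (well-defined since both parametrizations are injective near 0) satisfies: φ is (3/5)-Hölder near 0 but φ is not Lipschitz on any neighborhood of 0 in C. -/

import Mathlib

/-!
Put `u = s² - t²`, `v = s⁵ - t⁵`, `w = s³ - t³`; the distance between the points of `C` with
parameters `s` and `t` bounds `‖u‖` and `‖v‖` by some `d`. The identity `s² w = v - t³ u` and its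
mirror image give `‖s‖² ‖w‖ ≤ 2d` and `‖t‖² ‖w‖ ≤ 2d` on the unit disc, and `‖w‖ ≤ ‖s‖³ + ‖t‖³`;
hence `‖w‖⁵ ≤ ‖w‖³ (‖s‖³ + ‖t‖³)² ≤ 32 d³`, the `3/5`-Hölder bound. The parameters `δ` and `-δ`
give points at distance `2δ⁵` whose images are at distance `2δ³`, so no Lipschitz bound
survives as `δ → 0`.
-/

open Metric

/-- A point of `ℂ²` (with the Euclidean norm) with given coordinates. -/
noncomputable def pt (a b : ℂ) : EuclideanSpace ℂ (Fin 2) :=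
  (WithLp.equiv 2 (Fin 2 → ℂ)).symm ![a, b]

/-- The parametrization `t ↦ (t², t⁵)` of `C = {y² = x⁵}`. -/
noncomputable def par5 (t : ℂ) : EuclideanSpace ℂ (Fin 2) := pt (t ^ 2) (t ^ 5)

/-- The parametrization `t ↦ (t², t³)` of `C̃ = {y² = x³}`. -/
noncomputable def par3 (t : ℂ) : EuclideanSpace ℂ (Fin 2) := pt (t ^ 2) (t ^ 3)

open Filter Topology

section HolderEstimate

variable {𝕜 : Type*} [NormedField 𝕜] {s t : 𝕜} {d : ℝ}

theorem norm_sq_mul_norm_cube_sub_cube_le (ht : ‖t‖ ≤ 1) (h₂ : ‖s ^ 2 - t ^ 2‖ ≤ d)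
    (h₅ : ‖s ^ 5 - t ^ 5‖ ≤ d) : ‖s‖ ^ 2 * ‖s ^ 3 - t ^ 3‖ ≤ 2 * d := by
  have ht3 : ‖t‖ ^ 3 ≤ 1 := pow_le_one₀ (norm_nonneg t) ht
  calc ‖s‖ ^ 2 * ‖s ^ 3 - t ^ 3‖ = ‖(s ^ 5 - t ^ 5) - t ^ 3 * (s ^ 2 - t ^ 2)‖ := by
        rw [← norm_pow, ← norm_mul]; ring_nf
    _ ≤ ‖s ^ 5 - t ^ 5‖ + ‖t‖ ^ 3 * ‖s ^ 2 - t ^ 2‖ := by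
        rw [← norm_pow, ← norm_mul]; exact norm_sub_le _ _
    _ ≤ d + 1 * d := by gcongr
    _ = 2 * d := by ring

theorem norm_cube_sub_cube_pow_five_le (hs : ‖s‖ ≤ 1) (ht : ‖t‖ ≤ 1)
    (h₂ : ‖s ^ 2 - t ^ 2‖ ≤ d) (h₅ : ‖s ^ 5 - t ^ 5‖ ≤ d) :
    ‖s ^ 3 - t ^ 3‖ ^ 5 ≤ 32 * d ^ 3 := by
  have hsC := norm_sq_mul_norm_cube_sub_cube_le ht h₂ h₅
  have htC : ‖t‖ ^ 2 * ‖s ^ 3 - t ^ 3‖ ≤ 2 * d := by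
    rw [norm_sub_rev] at h₂ h₅ ⊢
    exact norm_sq_mul_norm_cube_sub_cube_le hs h₂ h₅
  have hw : ‖s ^ 3 - t ^ 3‖ ≤ ‖s‖ ^ 3 + ‖t‖ ^ 3 := by
    rw [← norm_pow, ← norm_pow]; exact norm_sub_le _ _
  set w := ‖s ^ 3 - t ^ 3‖
  have hw0 : 0 ≤ w := norm_nonneg _
  calc w ^ 5 = w ^ 3 * w ^ 2 := by ring
    _ ≤ w ^ 3 * (‖s‖ ^ 3 + ‖t‖ ^ 3) ^ 2 := by gcongr
    _ ≤ w ^ 3 * (2 * (‖s‖ ^ 6 + ‖t‖ ^ 6)) := by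
        gcongr; nlinarith [sq_nonneg (‖s‖ ^ 3 - ‖t‖ ^ 3)]
    _ = 2 * ((‖s‖ ^ 2 * w) ^ 3 + (‖t‖ ^ 2 * w) ^ 3) := by ring
    _ ≤ 2 * ((2 * d) ^ 3 + (2 * d) ^ 3) := by gcongr
    _ = 32 * d ^ 3 := by ring

theorem norm_sq_sub_sq_pow_five_le (hs : ‖s‖ ≤ 1) (ht : ‖t‖ ≤ 1) (h₂ : ‖s ^ 2 - t ^ 2‖ ≤ d) :
    ‖s ^ 2 - t ^ 2‖ ^ 5 ≤ 4 * d ^ 3 := by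
  set u := ‖s ^ 2 - t ^ 2‖
  have hu : u ≤ 2 := by
    calc u ≤ ‖s‖ ^ 2 + ‖t‖ ^ 2 := by
          rw [← norm_pow, ← norm_pow]; exact norm_sub_le _ _
      _ ≤ 1 + 1 := by gcongr <;> exact pow_le_one₀ (norm_nonneg _) ‹_›
      _ = 2 := by norm_num
  have hu0 : 0 ≤ u := norm_nonneg _
  calc u ^ 5 = u ^ 2 * u ^ 3 := by ring
    _ ≤ 2 ^ 2 * d ^ 3 := by gcongr
    _ = 4 * d ^ 3 := by norm_num

end HolderEstimate

theorem le_mul_rpow_of_pow_le {x c d : ℝ} {m n : ℕ} (hn : n ≠ 0) (hx : 0 ≤ x) (hc : 0 ≤ c)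
    (hd : 0 ≤ d) (h : x ^ n ≤ c ^ n * d ^ m) : x ≤ c * d ^ ((m : ℝ) / n) := by
  have hcd : (c * d ^ ((m : ℝ) / n)) ^ n = c ^ n * d ^ m := by
    rw [mul_pow, ← Real.rpow_mul_natCast hd, div_mul_cancel₀ _ (Nat.cast_ne_zero.mpr hn),
      Real.rpow_natCast]
  rw [← pow_le_pow_iff_left₀ hx (by positivity) hn, hcd]
  exact h

section Points

theorem norm_pt (a b : ℂ) : ‖pt a b‖ = Real.sqrt (‖a‖ ^ 2 + ‖b‖ ^ 2) := by
  simp [pt, EuclideanSpace.norm_eq, Fin.sum_univ_two]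

theorem pt_sub_pt (a b c d : ℂ) : pt a b - pt c d = pt (a - c) (b - d) := by
  ext i
  fin_cases i <;> simp [pt]

theorem norm_pt_le (a b : ℂ) : ‖pt a b‖ ≤ ‖a‖ + ‖b‖ := by
  rw [norm_pt, Real.sqrt_le_left (by positivity)]
  nlinarith [norm_nonneg a, norm_nonneg b]

theorem norm_fst_le_norm_pt (a b : ℂ) : ‖a‖ ≤ ‖pt a b‖ := by
  rw [norm_pt]
  exact Real.le_sqrt_of_sq_le (by nlinarith [sq_nonneg ‖b‖])

theorem norm_snd_le_norm_pt (a b : ℂ) : ‖b‖ ≤ ‖pt a b‖ := by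
  rw [norm_pt]
  exact Real.le_sqrt_of_sq_le (by nlinarith [sq_nonneg ‖a‖])

theorem norm_pt_zero_left (b : ℂ) : ‖pt 0 b‖ = ‖b‖ := by
  simp [norm_pt, Real.sqrt_sq (norm_nonneg b)]

end Points

section Parametrizations

theorem norm_le_one_of_norm_par5_lt_one {s : ℂ} (hs : ‖par5 s‖ < 1) : ‖s‖ ≤ 1 := by
  have h := (norm_fst_le_norm_pt (s ^ 2) (s ^ 5)).trans_lt hs
  rw [norm_pow, sq_lt_one_iff₀ (norm_nonneg s)] at h
  exact h.le

theorem norm_par5_le {u : ℂ} (hu : ‖u‖ ≤ 1) : ‖par5 u‖ ≤ 2 * ‖u‖ := by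
  have h2 : ‖u‖ ^ 2 ≤ ‖u‖ := pow_le_of_le_one (norm_nonneg u) hu two_ne_zero
  have h5 : ‖u‖ ^ 5 ≤ ‖u‖ := pow_le_of_le_one (norm_nonneg u) hu (by norm_num)
  calc ‖par5 u‖ ≤ ‖u ^ 2‖ + ‖u ^ 5‖ := norm_pt_le _ _
    _ ≤ 2 * ‖u‖ := by rw [norm_pow, norm_pow]; linarith

theorem norm_par3_sub_par3_le {s t : ℂ} (hs : ‖s‖ ≤ 1) (ht : ‖t‖ ≤ 1) :
    ‖par3 s - par3 t‖ ≤ 4 * ‖par5 s - par5 t‖ ^ ((3 : ℝ) / 5) := by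
  have hd : par5 s - par5 t = pt (s ^ 2 - t ^ 2) (s ^ 5 - t ^ 5) := pt_sub_pt _ _ _ _
  have h₂ : ‖s ^ 2 - t ^ 2‖ ≤ ‖par5 s - par5 t‖ := hd ▸ norm_fst_le_norm_pt _ _
  have h₅ : ‖s ^ 5 - t ^ 5‖ ≤ ‖par5 s - par5 t‖ := hd ▸ norm_snd_le_norm_pt _ _
  have hd3 := pow_nonneg (norm_nonneg (par5 s - par5 t)) 3
  have hA : ‖s ^ 2 - t ^ 2‖ ≤ 2 * ‖par5 s - par5 t‖ ^ ((3 : ℕ) / (5 : ℕ) : ℝ) :=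
    le_mul_rpow_of_pow_le (by norm_num) (norm_nonneg _) zero_le_two (norm_nonneg _)
      (by linarith [norm_sq_sub_sq_pow_five_le hs ht h₂])
  have hC : ‖s ^ 3 - t ^ 3‖ ≤ 2 * ‖par5 s - par5 t‖ ^ ((3 : ℕ) / (5 : ℕ) : ℝ) :=
    le_mul_rpow_of_pow_le (by norm_num) (norm_nonneg _) zero_le_two (norm_nonneg _)
      (by linarith [norm_cube_sub_cube_pow_five_le hs ht h₂ h₅])
  calc ‖par3 s - par3 t‖ ≤ ‖s ^ 2 - t ^ 2‖ + ‖s ^ 3 - t ^ 3‖ := by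
        rw [par3, par3, pt_sub_pt]; exact norm_pt_le _ _
    _ ≤ 4 * ‖par5 s - par5 t‖ ^ ((3 : ℝ) / 5) := by push_cast at hA hC; linarith

theorem par5_sub_par5_neg (u : ℂ) : par5 u - par5 (-u) = pt 0 (2 * u ^ 5) := by
  rw [par5, par5, pt_sub_pt]; congr 1 <;> ring

theorem par3_sub_par3_neg (u : ℂ) : par3 u - par3 (-u) = pt 0 (2 * u ^ 3) := by
  rw [par3, par3, pt_sub_pt]; congr 1 <;> ring

end Parametrizations

/-- The homeomorphism `φ(t², t⁵) = (t², t³)` from the cusp `y² = x⁵` to `y² = x³`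
is `(3/5)`-Hölder near `0` but not Lipschitz on any neighborhood of `0`. -/
theorem phi_holder_not_lipschitz
    (φ : EuclideanSpace ℂ (Fin 2) → EuclideanSpace ℂ (Fin 2))
    (hφ : ∀ t : ℂ, φ (par5 t) = par3 t) :
    (∃ ε > (0:ℝ), ∃ K > (0:ℝ), ∀ p ∈ Set.range par5 ∩ ball 0 ε,
        ∀ q ∈ Set.range par5 ∩ ball 0 ε, ‖φ p - φ q‖ ≤ K * ‖p - q‖ ^ ((3:ℝ)/5)) ∧
    ∀ ε > (0:ℝ), ¬ ∃ K > (0:ℝ), ∀ p ∈ Set.range par5 ∩ ball 0 ε,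
        ∀ q ∈ Set.range par5 ∩ ball 0 ε, ‖φ p - φ q‖ ≤ K * ‖p - q‖ := by
  constructor
  · refine ⟨1, one_pos, 4, by norm_num, ?_⟩
    rintro _ ⟨⟨s, rfl⟩, hs⟩ _ ⟨⟨t, rfl⟩, ht⟩
    rw [mem_ball_zero_iff] at hs ht
    rw [hφ, hφ]
    exact norm_par3_sub_par3_le (norm_le_one_of_norm_par5_lt_one hs)
      (norm_le_one_of_norm_par5_lt_one ht)
  · rintro ε hε ⟨K, hK, hlip⟩
    obtain ⟨δ, hδ1, hδε, hδK, hδ0⟩ : ∃ δ : ℝ, δ < 1 ∧ δ < ε / 2 ∧ δ < 1 / K ∧ 0 < δ := by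
      have small {c : ℝ} (hc : 0 < c) : ∀ᶠ δ in 𝓝[>] (0 : ℝ), δ < c :=
        nhdsWithin_le_nhds (eventually_lt_nhds hc)
      exact ((small one_pos).and ((small (half_pos hε)).and
        ((small (by positivity)).and self_mem_nhdsWithin))).exists
    have hu : ‖(δ : ℂ)‖ = δ := by simp [hδ0.le]
    have mem (v : ℂ) (hv : ‖v‖ = δ) : par5 v ∈ Set.range par5 ∩ ball 0 ε :=
      ⟨⟨v, rfl⟩, mem_ball_zero_iff.2 <| (norm_par5_le (by linarith)).trans_lt (by linarith)⟩
    have key := hlip _ (mem δ hu) _ (mem (-δ) (by rw [norm_neg, hu]))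
    rw [hφ, hφ, par3_sub_par3_neg, par5_sub_par5_neg, norm_pt_zero_left, norm_pt_zero_left,
      norm_mul, norm_mul, norm_pow, norm_pow, hu, Complex.norm_two] at key
    have hKδ : K * δ < 1 := by rwa [lt_div_iff₀ hK, mul_comm] at hδK
    nlinarith [pow_pos hδ0 3, mul_lt_mul_of_pos_right hKδ (pow_pos hδ0 4)]
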